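/- arXiv:2201.02019 — 3 statements merged into one kernel-verified Lean document; each statement's English description precedes it below -/
import Mathlib

section
/- Let k be a positive integer. For integers j1, j2 in {1,...,k+1} and i1 in {0,...,2j1}, i2 in {0,...,2j2}, with i1 ≥ i2, define p(i,j) = 2(2k+1)j - 2k·i. Then p(i1,j1) = p(i2,j2) if and only if one of the following holds: (a) i1 = i2 and j1 = j2; (b) i1 = 2k+1, i2 = 0, j1 = k+1, j2 = 1; (c) i1 = 2k+2, i2 = 1, j1 = k+1, j2 = 1. -/
/-- For a positive integer `k`, the exponent map `p(i,j) = 2(2k+1)j - 2k·i`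
on the index set `1 ≤ j ≤ k+1`, `0 ≤ i ≤ 2j`, with `i₁ ≥ i₂`, satisfies
`p(i₁,j₁) = p(i₂,j₂)` iff one of three explicit cases holds. -/
theorem stmt1 (k j₁ j₂ i₁ i₂ : ℤ) (hk : 1 ≤ k)
    (hj₁ : 1 ≤ j₁ ∧ j₁ ≤ k + 1) (hj₂ : 1 ≤ j₂ ∧ j₂ ≤ k + 1)
    (hi₁ : 0 ≤ i₁ ∧ i₁ ≤ 2 * j₁) (hi₂ : 0 ≤ i₂ ∧ i₂ ≤ 2 * j₂)
    (hord : i₂ ≤ i₁) :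
    2 * (2 * k + 1) * j₁ - 2 * k * i₁ = 2 * (2 * k + 1) * j₂ - 2 * k * i₂ ↔
      (i₁ = i₂ ∧ j₁ = j₂) ∨
      (i₁ = 2 * k + 1 ∧ i₂ = 0 ∧ j₁ = k + 1 ∧ j₂ = 1) ∨
      (i₁ = 2 * k + 2 ∧ i₂ = 1 ∧ j₁ = k + 1 ∧ j₂ = 1) := by
  constructor
  · intro h
    have key : (2 * k + 1) * (j₁ - j₂) = k * (i₁ - i₂) := by ring_nf; linarith
    have hcop : IsCoprime k (2 * k + 1) := ⟨-2, 1, by ring⟩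
    have hdvd : k ∣ (j₁ - j₂) := by
      have : k ∣ (2 * k + 1) * (j₁ - j₂) := key ▸ Dvd.intro _ rfl
      exact (hcop.dvd_of_dvd_mul_left this)
    obtain ⟨t, ht⟩ := hdvd
    have hk0 : k ≠ 0 := by omega
    have he : i₁ - i₂ = (2 * k + 1) * t := by
      have h2 : k * (i₁ - i₂) = k * ((2 * k + 1) * t) := by rw [← key, ht]; ring
      exact mul_left_cancel₀ hk0 h2
    have ht0 : 0 ≤ t := by nlinarith
    have ht1 : t ≤ 1 := by nlinarith
    interval_cases t
    · left; constructor <;> omega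
    · right; omega
  · rintro (⟨h1, h2⟩ | ⟨h1, h2, h3, h4⟩ | ⟨h1, h2, h3, h4⟩) <;> subst_vars <;> ring
end

section
/- Let k ≥ 1 be an integer and define h₁(u) = u + (2k+1)u^{8k+1}, h₂(u) = u^{2k} + (2k+1)u^{6k}, h₃(u) = u^{4k+1}. Then near u = 0⁺: W(h₁)(u) = u + (2k+1)u^{8k+1}, W(h₁,h₂)(u) = (2k-1)u^{2k} + O(u^{6k}), and W(h₁,h₂,h₃)(u) = 4k(4k²-1)u^{6k-1} + O(u^{10k-1}). In particular, if k > 1 there exists b₀ > 0 such that none of W(h₁), W(h₁,h₂), W(h₁,h₂,h₃) vanishes on (0, b₀). -/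
lemma hdm (a : ℝ) (n m : ℕ) (h : m + 1 = n) (u : ℝ) :
    HasDerivAt (fun x : ℝ => a * x ^ n) (a * n * u ^ m) u := by
  subst h
  simpa [mul_assoc] using (hasDerivAt_pow (m+1) u).const_mul a

lemma det3_of (a b c d e f g h i : ℝ) :
    Matrix.det !![a,b,c;d,e,f;g,h,i] =
      a*e*i - a*f*h - b*d*i + b*f*g + c*d*h - c*e*g := by
  simp [Matrix.det_fin_three]

lemma hdp (n m : ℕ) (h : m + 1 = n) (u : ℝ) :
    HasDerivAt (fun x : ℝ => x ^ n) ((n:ℝ) * u ^ m) u := by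
  subst h; simpa using hasDerivAt_pow (m+1) u

set_option maxHeartbeats 1000000 in
/-- Asymptotics as `u → 0⁺` of the initial Wronskians of
`h₁(u) = u + (2k+1)u^{8k+1}`, `h₂(u) = u^{2k} + (2k+1)u^{6k}`, `h₃(u) = u^{4k+1}`,
and their nonvanishing on some `(0,b₀)` when `k > 1`. -/
theorem stmt8 (k : ℕ) (hk : 1 ≤ k)
    (h₁ h₂ h₃ : ℝ → ℝ)
    (hh₁ : h₁ = fun u => u + (2 * (k : ℝ) + 1) * u ^ (8 * k + 1))
    (hh₂ : h₂ = fun u => u ^ (2 * k) + (2 * (k : ℝ) + 1) * u ^ (6 * k))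
    (hh₃ : h₃ = fun u => u ^ (4 * k + 1))
    (W₁ W₂ W₃ : ℝ → ℝ)
    (hW₁ : W₁ = fun u => Matrix.det !![h₁ u])
    (hW₂ : W₂ = fun u => Matrix.det !![h₁ u, h₂ u; deriv h₁ u, deriv h₂ u])
    (hW₃ : W₃ = fun u => Matrix.det
      !![h₁ u, h₂ u, h₃ u;
         deriv h₁ u, deriv h₂ u, deriv h₃ u;
         iteratedDeriv 2 h₁ u, iteratedDeriv 2 h₂ u, iteratedDeriv 2 h₃ u]) :
    (∀ u : ℝ, W₁ u = u + (2 * (k : ℝ) + 1) * u ^ (8 * k + 1)) ∧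
    (∃ C > (0:ℝ), ∃ δ > (0:ℝ), ∀ u ∈ Set.Ioo (0:ℝ) δ,
      |W₂ u - (2 * (k : ℝ) - 1) * u ^ (2 * k)| ≤ C * u ^ (6 * k)) ∧
    (∃ C > (0:ℝ), ∃ δ > (0:ℝ), ∀ u ∈ Set.Ioo (0:ℝ) δ,
      |W₃ u - 4 * (k : ℝ) * (4 * (k : ℝ) ^ 2 - 1) * u ^ (6 * k - 1)|
        ≤ C * u ^ (10 * k - 1)) ∧
    (1 < k → ∃ b₀ > (0:ℝ), ∀ u ∈ Set.Ioo (0:ℝ) b₀,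
      W₁ u ≠ 0 ∧ W₂ u ≠ 0 ∧ W₃ u ≠ 0) := by
  obtain ⟨j, rfl⟩ : ∃ j, k = j + 1 := ⟨k - 1, by omega⟩
  set t : ℝ := (j : ℝ) + 1 with ht
  -- normalized descriptions
  have H1 : h₁ = fun u => u + (2*(j:ℝ)+3) * u ^ (8*j+9) := by
    rw [hh₁]; funext u; push_cast; ring
  have H2 : h₂ = fun u => u ^ (2*j+2) + (2*(j:ℝ)+3) * u ^ (6*j+6) := by
    rw [hh₂]; funext u; push_cast; ring
  have H3 : h₃ = fun u => u ^ (4*j+5) := by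
    rw [hh₃]; funext u; ring
  -- first derivatives
  have d1 : ∀ u : ℝ, HasDerivAt h₁
      (1 + (2*(j:ℝ)+3) * ((8*j+9:ℕ):ℝ) * u ^ (8*j+8)) u := by
    intro u; rw [H1]; exact (hasDerivAt_id u).add (hdm _ _ _ (by omega) u)
  have d2 : ∀ u : ℝ, HasDerivAt h₂
      (((2*j+2:ℕ):ℝ) * u ^ (2*j+1) + (2*(j:ℝ)+3) * ((6*j+6:ℕ):ℝ) * u ^ (6*j+5)) u := by
    intro u; rw [H2]; exact (hdp _ _ (by omega) u).add (hdm _ _ _ (by omega) u)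
  have d3 : ∀ u : ℝ, HasDerivAt h₃ (((4*j+5:ℕ):ℝ) * u ^ (4*j+4)) u := by
    intro u; rw [H3]; exact hdp _ _ (by omega) u
  have E1 : deriv h₁ = fun u => 1 + (2*(j:ℝ)+3) * ((8*j+9:ℕ):ℝ) * u ^ (8*j+8) :=
    funext fun u => (d1 u).deriv
  have E2 : deriv h₂ = fun u =>
      ((2*j+2:ℕ):ℝ) * u ^ (2*j+1) + (2*(j:ℝ)+3) * ((6*j+6:ℕ):ℝ) * u ^ (6*j+5) :=
    funext fun u => (d2 u).deriv
  have E3 : deriv h₃ = fun u => ((4*j+5:ℕ):ℝ) * u ^ (4*j+4) :=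
    funext fun u => (d3 u).deriv
  -- second derivatives
  have d1' : ∀ u : ℝ, HasDerivAt (deriv h₁)
      ((2*(j:ℝ)+3) * ((8*j+9:ℕ):ℝ) * ((8*j+8:ℕ):ℝ) * u ^ (8*j+7)) u := by
    intro u; rw [E1]
    exact ((hasDerivAt_const u (1:ℝ)).add
      (hdm ((2*(j:ℝ)+3) * ((8*j+9:ℕ):ℝ)) (8*j+8) (8*j+7) (by omega) u)).congr_deriv (zero_add _)
  have d2' : ∀ u : ℝ, HasDerivAt (deriv h₂)
      (((2*j+2:ℕ):ℝ) * ((2*j+1:ℕ):ℝ) * u ^ (2*j)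
        + (2*(j:ℝ)+3) * ((6*j+6:ℕ):ℝ) * ((6*j+5:ℕ):ℝ) * u ^ (6*j+4)) u := by
    intro u; rw [E2]
    exact (hdm ((2*j+2:ℕ):ℝ) (2*j+1) (2*j) (by omega) u).add
      (hdm ((2*(j:ℝ)+3) * ((6*j+6:ℕ):ℝ)) (6*j+5) (6*j+4) (by omega) u)
  have d3' : ∀ u : ℝ, HasDerivAt (deriv h₃)
      (((4*j+5:ℕ):ℝ) * ((4*j+4:ℕ):ℝ) * u ^ (4*j+3)) u := by
    intro u; rw [E3]; exact hdm _ _ _ (by omega) u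
  have E1' : iteratedDeriv 2 h₁ = fun u =>
      (2*(j:ℝ)+3) * ((8*j+9:ℕ):ℝ) * ((8*j+8:ℕ):ℝ) * u ^ (8*j+7) := by
    rw [iteratedDeriv_succ, iteratedDeriv_one]; exact funext fun u => (d1' u).deriv
  have E2' : iteratedDeriv 2 h₂ = fun u =>
      ((2*j+2:ℕ):ℝ) * ((2*j+1:ℕ):ℝ) * u ^ (2*j)
        + (2*(j:ℝ)+3) * ((6*j+6:ℕ):ℝ) * ((6*j+5:ℕ):ℝ) * u ^ (6*j+4) := by
    rw [iteratedDeriv_succ, iteratedDeriv_one]; exact funext fun u => (d2' u).deriv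
  have E3' : iteratedDeriv 2 h₃ = fun u =>
      ((4*j+5:ℕ):ℝ) * ((4*j+4:ℕ):ℝ) * u ^ (4*j+3) := by
    rw [iteratedDeriv_succ, iteratedDeriv_one]; exact funext fun u => (d3' u).deriv
  -- key polynomial identities
  have ID2 : ∀ u : ℝ, W₂ u - (2 * t - 1) * u ^ (2*j+2)
      = u ^ (6*j+6) * ((12*t^2+4*t-1) + (-(12*t^2+8*t+1)) * u ^ (4*j+4)
          + (-(8*t^3+12*t^2+6*t+1)) * u ^ (8*j+8)) := by
    intro u
    simp only [hW₂, Matrix.det_fin_two_of, E1, E2]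
    simp only [H1, H2, ht]
    push_cast; ring
  have ID3 : ∀ u : ℝ, W₃ u - 4 * t * (4 * t ^ 2 - 1) * u ^ (6*j+5)
      = u ^ (10*j+9) * ((-96*t^4+16*t^3+24*t^2-4*t)
          + (96*t^4+112*t^3+40*t^2+4*t) * u ^ (4*j+4)
          + (-(64*t^5+64*t^4-16*t^2-4*t)) * u ^ (8*j+8)) := by
    intro u
    simp only [hW₃, det3_of]
    simp only [E1', E2', E3']
    simp only [E1, E2, E3]
    simp only [H1, H2, H3, ht]
    push_cast; ring
  -- coefficients
  set q0 : ℝ := 12*t^2+4*t-1 with hq0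
  set q1 : ℝ := -(12*t^2+8*t+1) with hq1
  set q2 : ℝ := -(8*t^3+12*t^2+6*t+1) with hq2
  set r0 : ℝ := -96*t^4+16*t^3+24*t^2-4*t with hr0
  set r1 : ℝ := 96*t^4+112*t^3+40*t^2+4*t with hr1
  set r2 : ℝ := -(64*t^5+64*t^4-16*t^2-4*t) with hr2
  set C2 : ℝ := |q0| + |q1| + |q2| + 1 with hC2
  set C3 : ℝ := |r0| + |r1| + |r2| + 1 with hC3
  have hC2pos : 0 < C2 := by positivity
  have hC3pos : 0 < C3 := by positivity
  have ht1 : (1:ℝ) ≤ t := by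
    have h0j : (0:ℝ) ≤ (j:ℝ) := Nat.cast_nonneg j
    rw [ht]; linarith
  -- generic tail bound on (0,1)
  have key : ∀ u ∈ Set.Ioo (0:ℝ) 1, ∀ (x y z : ℝ) (n m : ℕ),
      |x + y * u ^ n + z * u ^ m| ≤ |x| + |y| + |z| := by
    intro u hu x y z n m
    have h01 : (0:ℝ) ≤ u := hu.1.le
    have hb : ∀ (q : ℝ) (n : ℕ), |q * u ^ n| ≤ |q| := by
      intro q n
      rw [abs_mul, abs_pow, abs_of_nonneg h01]
      exact mul_le_of_le_one_right (abs_nonneg q) (pow_le_one₀ h01 hu.2.le)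
    calc |x + y * u ^ n + z * u ^ m| ≤ |x| + |y * u ^ n| + |z * u ^ m| :=
          abs_add_three _ _ _
      _ ≤ |x| + |y| + |z| := by
          have := hb y n; have := hb z m; linarith [hb y n, hb z m]
  -- bounds on (0,1)
  have B2 : ∀ u ∈ Set.Ioo (0:ℝ) 1,
      |W₂ u - (2 * t - 1) * u ^ (2*j+2)| ≤ C2 * u ^ (6*j+6) := by
    intro u hu
    rw [ID2 u, abs_mul, abs_of_nonneg (pow_nonneg hu.1.le _)]
    calc u ^ (6*j+6) * |q0 + q1 * u ^ (4*j+4) + q2 * u ^ (8*j+8)|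
        ≤ u ^ (6*j+6) * C2 := by
          refine mul_le_mul_of_nonneg_left ?_ (pow_nonneg hu.1.le _)
          have := key u hu q0 q1 q2 (4*j+4) (8*j+8)
          linarith
      _ = C2 * u ^ (6*j+6) := by ring
  have B3 : ∀ u ∈ Set.Ioo (0:ℝ) 1,
      |W₃ u - 4 * t * (4 * t ^ 2 - 1) * u ^ (6*j+5)| ≤ C3 * u ^ (10*j+9) := by
    intro u hu
    rw [ID3 u, abs_mul, abs_of_nonneg (pow_nonneg hu.1.le _)]
    calc u ^ (10*j+9) * |r0 + r1 * u ^ (4*j+4) + r2 * u ^ (8*j+8)|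
        ≤ u ^ (10*j+9) * C3 := by
          refine mul_le_mul_of_nonneg_left ?_ (pow_nonneg hu.1.le _)
          have := key u hu r0 r1 r2 (4*j+4) (8*j+8)
          linarith
      _ = C3 * u ^ (10*j+9) := by ring
  -- conjunct 1
  have P1 : ∀ u : ℝ, W₁ u = u + (2 * ((j:ℕ)+1 : ℕ) + 1 : ℝ) * u ^ (8 * (j+1) + 1) := by
    intro u
    simp only [hW₁, Matrix.det_fin_one_of, hh₁]
  refine ⟨by exact_mod_cast P1, ?_, ?_, ?_⟩
  · -- conjunct 2
    refine ⟨C2, hC2pos, 1, one_pos, ?_⟩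
    intro u hu
    have := B2 u hu
    simp only [show 2*(j+1) = 2*j+2 by ring, show 6*(j+1) = 6*j+6 by ring]
    push_cast
    convert this using 3 <;> push_cast <;> ring
  · -- conjunct 3
    refine ⟨C3, hC3pos, 1, one_pos, ?_⟩
    intro u hu
    have := B3 u hu
    simp only [show 6*(j+1)-1 = 6*j+5 by omega, show 10*(j+1)-1 = 10*j+9 by omega]
    push_cast
    convert this using 3 <;> push_cast <;> ring
  · -- conjunct 4
    intro _
    have hL : 0 < 4 * t * (4 * t ^ 2 - 1) := by nlinarith
    have h2t : 0 < 2 * t - 1 := by linarith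
    refine ⟨min 1 (min ((2*t-1)/C2) ((4 * t * (4 * t ^ 2 - 1))/C3)), by positivity, ?_⟩
    intro u hu
    have hu0 : 0 < u := hu.1
    have hu1 : u < 1 := lt_of_lt_of_le hu.2 (min_le_left _ _)
    have huI : u ∈ Set.Ioo (0:ℝ) 1 := ⟨hu0, hu1⟩
    have hu2 : u * C2 < 2*t-1 := by
      have := lt_of_lt_of_le hu.2 (le_trans (min_le_right _ _) (min_le_left _ _))
      exact (lt_div_iff₀ hC2pos).mp this
    have hu3 : u * C3 < 4 * t * (4 * t ^ 2 - 1) := by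
      have := lt_of_lt_of_le hu.2 (le_trans (min_le_right _ _) (min_le_right _ _))
      exact (lt_div_iff₀ hC3pos).mp this
    refine ⟨?_, ?_, ?_⟩
    · -- W₁ ≠ 0
      have := P1 u
      have hpos : 0 < u + (2 * ((j:ℕ)+1 : ℕ) + 1 : ℝ) * u ^ (8 * (j+1) + 1) := by
        have : (0:ℝ) < (2 * ((j:ℕ)+1 : ℕ) + 1 : ℝ) := by positivity
        nlinarith [pow_pos hu0 (8 * (j+1) + 1)]
      rw [P1 u]; exact ne_of_gt hpos
    · -- W₂ ≠ 0
      have hb := B2 u huI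
      have hlead : 0 < (2 * t - 1) * u ^ (2*j+2) := mul_pos h2t (pow_pos hu0 _)
      have hmono : u ^ (6*j+6) ≤ u * u ^ (2*j+2) := by
        calc u ^ (6*j+6) ≤ u ^ (2*j+3) :=
              pow_le_pow_of_le_one hu0.le hu1.le (by omega)
          _ = u * u ^ (2*j+2) := by ring
      have hstrict : C2 * u ^ (6*j+6) < (2 * t - 1) * u ^ (2*j+2) := by
        have h1 : C2 * u ^ (6*j+6) ≤ C2 * (u * u ^ (2*j+2)) :=
          mul_le_mul_of_nonneg_left hmono hC2pos.le
        have h2 : (u * C2) * u ^ (2*j+2) < (2*t-1) * u ^ (2*j+2) :=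
          mul_lt_mul_of_pos_right hu2 (pow_pos hu0 _)
        nlinarith
      intro h0
      rw [h0] at hb
      rw [zero_sub, abs_neg, abs_of_pos hlead] at hb
      linarith
    · -- W₃ ≠ 0
      have hb := B3 u huI
      have hlead : 0 < 4 * t * (4 * t ^ 2 - 1) * u ^ (6*j+5) := mul_pos hL (pow_pos hu0 _)
      have hmono : u ^ (10*j+9) ≤ u * u ^ (6*j+5) := by
        calc u ^ (10*j+9) ≤ u ^ (6*j+6) :=
              pow_le_pow_of_le_one hu0.le hu1.le (by omega)
          _ = u * u ^ (6*j+5) := by ring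
      have hstrict : C3 * u ^ (10*j+9) < 4 * t * (4 * t ^ 2 - 1) * u ^ (6*j+5) := by
        have h1 : C3 * u ^ (10*j+9) ≤ C3 * (u * u ^ (6*j+5)) :=
          mul_le_mul_of_nonneg_left hmono hC3pos.le
        have h2 : (u * C3) * u ^ (6*j+5) < 4 * t * (4 * t ^ 2 - 1) * u ^ (6*j+5) :=
          mul_lt_mul_of_pos_right hu3 (pow_pos hu0 _)
        nlinarith
      intro h0
      rw [h0] at hb
      rw [zero_sub, abs_neg, abs_of_pos hlead] at hb
      linarith
end

section
/- Let k > 1 and m ≥ 1 be integers, p₁ < p₂ < ⋯ < pₘ positive integers. Consider the ordered set G = [h₁, h₂, h₃, h₄, ..., h_{m+3}] where h₁(u) = u + (2k+1)u^{8k+1}, h₂(u) = u^{2k} + (2k+1)u^{6k}, h₃(u) = u^{4k+1}, and h_{i+3}(u) = u^{2(k+pᵢ)} for i = 1,...,m. Assume all exponents 1, 2k, 4k+1, 2(k+p₁), ..., 2(k+pₘ) appearing as leading orders are such that the exponents 2(k+pᵢ) are pairwise distinct and distinct from 1, 2k, 4k+1. Then there exists b₀ > 0 such that G is an ECT-system on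 (0, b₀). -/
open Polynomial Matrix

/-- Lower exponents of the columns. -/
def expE (k : ℕ) (p : ℕ → ℕ) : ℕ → ℕ
  | 0 => 1
  | 1 => 2 * k
  | 2 => 4 * k + 1
  | (n+3) => 2 * (k + p n)

/-- Upper exponents of the columns. -/
def expF (k : ℕ) (p : ℕ → ℕ) : ℕ → ℕ
  | 0 => 8 * k + 1
  | 1 => 6 * k
  | 2 => 4 * k + 1
  | (n+3) => 2 * (k + p n)

/-- Coefficient of the upper monomial. -/
def coefB (k : ℕ) : ℕ → ℝ
  | 0 => 2 * (k:ℝ) + 1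
  | 1 => 2 * (k:ℝ) + 1
  | _ => 0

lemma aux_iteratedDeriv_eval (P : Polynomial ℝ) (r : ℕ) :
    iteratedDeriv r (fun u => P.eval u) = fun u => (Polynomial.derivative^[r] P).eval u := by
  induction r with
  | zero => simp
  | succ n ih =>
    rw [iteratedDeriv_succ, ih, Function.iterate_succ_apply']
    ext u
    exact Polynomial.deriv _

lemma aux_detD_ne_zero {n : ℕ} (a : Fin n → ℕ) (ha : Function.Injective a) :
    (Matrix.of fun r c : Fin n => ((a c).descFactorial r : ℝ)).det ≠ 0 := by
  have h1 : (Matrix.of fun r c : Fin n => ((a c).descFactorial r : ℝ))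
      = (Matrix.of fun c r : Fin n => ((descPochhammer ℝ (r:ℕ)).eval ((a c : ℕ) : ℝ)))ᵀ := by
    ext r c
    simp [descPochhammer_eval_eq_descFactorial]
  rw [h1, Matrix.det_transpose,
    ← Matrix.det_eval_matrixOfPolynomials_eq_det_vandermonde _ _
      (fun i => descPochhammer_natDegree (R := ℝ) (i:ℕ)) (fun i => monic_descPochhammer ℝ (i:ℕ))]
  refine Matrix.det_vandermonde_ne_zero_iff.mpr ?_
  intro i j hij
  exact ha (Nat.cast_injective hij)

lemma aux_sum_ge {n : ℕ} (a : Fin n → ℕ)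
    (h : (Matrix.of fun r c : Fin n => ((a c).descFactorial r : ℝ)).det ≠ 0) :
    ∑ r : Fin n, (r:ℕ) ≤ ∑ c, a c := by
  rw [Matrix.det_apply] at h
  obtain ⟨σ, -, hσ⟩ := Finset.exists_ne_zero_of_sum_ne_zero h
  have hterm : ∀ i : Fin n, ((a i).descFactorial (σ i) : ℝ) ≠ 0 := by
    intro i
    have hp : (∏ i, (Matrix.of fun r c : Fin n => ((a c).descFactorial r : ℝ)) (σ i) i) ≠ 0 := by
      intro h0
      exact hσ (by rw [h0, smul_zero])
    have := Finset.prod_ne_zero_iff.mp hp i (Finset.mem_univ i)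
    simpa using this
  have hle : ∀ i : Fin n, (σ i : ℕ) ≤ a i := by
    intro i
    by_contra hlt
    push_neg at hlt
    have := Nat.descFactorial_eq_zero_iff_lt.mpr hlt
    exact hterm i (by exact_mod_cast congrArg (Nat.cast : ℕ → ℝ) this)
  calc ∑ r : Fin n, (r:ℕ) = ∑ i, (σ i : ℕ) := (Equiv.sum_comp σ (fun r : Fin n => (r:ℕ))).symm
    _ ≤ ∑ i, a i := Finset.sum_le_sum fun i _ => hle i

lemma aux_mono_det0 {n : ℕ} (a : Fin n → ℕ) :
    (Matrix.of fun r c : Fin n => Polynomial.derivative^[(r:ℕ)] (X ^ (a c) : Polynomial ℝ)).det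
    = C ((Matrix.of fun r c : Fin n => ((a c).descFactorial r : ℝ)).det)
        * X ^ (∑ c, a c - ∑ r : Fin n, (r:ℕ)) := by
  rw [Matrix.det_apply, Matrix.det_apply, map_sum, Finset.sum_mul]
  refine Finset.sum_congr rfl ?_
  intro σ _
  have hentry : ∀ i : Fin n,
      (Matrix.of fun r c : Fin n =>
        Polynomial.derivative^[(r:ℕ)] (X ^ (a c) : Polynomial ℝ)) (σ i) i
      = C (((a i).descFactorial (σ i) : ℝ)) * X ^ (a i - (σ i : ℕ)) := fun i => by
    simp [Polynomial.iterate_derivative_X_pow_eq_C_mul]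
  simp only [hentry]
  rw [Finset.prod_mul_distrib, ← map_prod, Finset.prod_pow_eq_pow_sum]
  by_cases hd : (∏ i, ((a i).descFactorial (σ i) : ℝ)) = 0
  · rw [hd]
    have hd2 : ((∏ i, (Matrix.of fun r c : Fin n => ((a c).descFactorial r : ℝ)) (σ i) i)) = 0 := by
      simpa using hd
    rw [hd2]
    simp
  · have hle : ∀ i : Fin n, (σ i : ℕ) ≤ a i := by
      intro i
      by_contra hlt
      push_neg at hlt
      have h0 := Nat.descFactorial_eq_zero_iff_lt.mpr hlt
      exact Finset.prod_ne_zero_iff.mp hd i (Finset.mem_univ i)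
        (by exact_mod_cast congrArg (Nat.cast : ℕ → ℝ) h0)
    have hsum : ∑ i, (a i - (σ i : ℕ)) = ∑ c, a c - ∑ r : Fin n, (r:ℕ) := by
      rw [Finset.sum_tsub_distrib Finset.univ (fun i _ => hle i)]
      congr 1
      exact Equiv.sum_comp σ (fun r : Fin n => (r:ℕ))
    rw [hsum]
    have hd2 : ((∏ i, (Matrix.of fun r c : Fin n => ((a c).descFactorial r : ℝ)) (σ i) i))
        = ∏ i, ((a i).descFactorial (σ i) : ℝ) := by simp
    rw [hd2, Units.smul_def, Units.smul_def, zsmul_eq_mul, zsmul_eq_mul, _root_.map_mul]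
    rw [map_intCast]
    ring

lemma aux_mono_det {n : ℕ} (a : Fin n → ℕ) (γ : Fin n → ℝ) :
    (Matrix.of fun r c : Fin n =>
        Polynomial.derivative^[(r:ℕ)] (C (γ c) * X ^ (a c))).det
    = C ((∏ c, γ c) * (Matrix.of fun r c : Fin n => ((a c).descFactorial r : ℝ)).det)
        * X ^ (∑ c, a c - ∑ r : Fin n, (r:ℕ)) := by
  have h1 : (Matrix.of fun r c : Fin n => Polynomial.derivative^[(r:ℕ)] (C (γ c) * X ^ (a c)))
      = Matrix.of (fun r c : Fin n => C (γ c) * Polynomial.derivative^[(r:ℕ)] (X ^ (a c))) := by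
    ext r c
    simp [Polynomial.iterate_derivative_C_mul]
  rw [h1, Matrix.det_mul_row (fun c => C (γ c)) (fun r c : Fin n => Polynomial.derivative^[(r:ℕ)] (X ^ (a c) : Polynomial ℝ))]
  have h2 : Matrix.det (fun r c : Fin n => Polynomial.derivative^[(r:ℕ)] (X ^ (a c) : Polynomial ℝ))
      = (Matrix.of fun r c : Fin n => Polynomial.derivative^[(r:ℕ)] (X ^ (a c) : Polynomial ℝ)).det := rfl
  rw [h2, aux_mono_det0, _root_.map_mul, ← map_prod, mul_assoc]

lemma aux_det_split {n : ℕ} (A B : Fin n → Fin n → Polynomial ℝ) :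
    (Matrix.of fun r c : Fin n => A c r + B c r).det
    = ∑ s : Finset (Fin n),
        (Matrix.of fun r c : Fin n => if c ∈ s then A c r else B c r).det := by
  have h := (Matrix.detRowAlternating (n := Fin n)
      (R := Polynomial ℝ)).toMultilinearMap.map_add_univ A B
  have hL : (Matrix.of fun r c : Fin n => A c r + B c r).det
      = Matrix.detRowAlternating.toMultilinearMap (A + B) := by
    rw [← Matrix.det_transpose]
    rfl
  rw [hL, h]
  refine Finset.sum_congr rfl ?_
  intro s _
  have hM : s.piecewise A B = (Matrix.of fun r c : Fin n => if c ∈ s then A c r else B c r)ᵀ := by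
    funext c r
    change (if c ∈ s then A c else B c) r = if c ∈ s then A c r else B c r
    by_cases hc : c ∈ s <;> simp [hc]
  show Matrix.det (s.piecewise A B) = _
  rw [hM, Matrix.det_transpose]

lemma aux_eps (P : Polynomial ℝ) (hP : P ≠ 0) :
    ∃ ε > (0:ℝ), ∀ u ∈ Set.Ioo (0:ℝ) ε, P.eval u ≠ 0 := by
  classical
  set S := P.roots.toFinset.filter (fun x => 0 < x) with hS
  have hmem : ∀ u : ℝ, 0 < u → P.eval u = 0 → u ∈ S := by
    intro u hu0 h0
    rw [hS, Finset.mem_filter, Multiset.mem_toFinset]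
    exact ⟨(Polynomial.mem_roots hP).mpr h0, hu0⟩
  by_cases hne : S.Nonempty
  · refine ⟨S.min' hne, ?_, ?_⟩
    · exact (Finset.mem_filter.mp (S.min'_mem hne)).2
    · rintro u ⟨hu0, hu1⟩ h0
      exact absurd (S.min'_le u (hmem u hu0 h0)) (not_le.mpr hu1)
  · refine ⟨1, one_pos, ?_⟩
    rintro u ⟨hu0, -⟩ h0
    exact hne ⟨u, hmem u hu0 h0⟩



/-- For `k > 1`, `m ≥ 1`, and increasing positive integers `p₀ < … < p_{m-1}`
whose associated exponents `2(k+pᵢ)` are pairwise distinct and distinct from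
`1`, `2k`, `4k+1`, the ordered set `[h₁, h₂, h₃, u^{2(k+p₀)}, …, u^{2(k+p_{m-1})}]`
is an ECT-system on some interval `(0, b₀)`: every initial Wronskian is
nonvanishing there. -/
theorem stmt10 (k m : ℕ) (hk : 1 < k) (hm : 1 ≤ m)
    (p : ℕ → ℕ)
    (hppos : ∀ i < m, 0 < p i)
    (hpmono : ∀ i j : ℕ, i < j → j < m → p i < p j)
    (hdist : ∀ i < m, 2 * (k + p i) ≠ 1 ∧ 2 * (k + p i) ≠ 2 * k ∧
      2 * (k + p i) ≠ 4 * k + 1)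
    (hdist' : ∀ i < m, ∀ j < m, i ≠ j → 2 * (k + p i) ≠ 2 * (k + p j))
    (H : Fin (m + 3) → ℝ → ℝ)
    (hH : H = fun (i : Fin (m + 3)) (u : ℝ) =>
      if (i : ℕ) = 0 then u + (2 * (k : ℝ) + 1) * u ^ (8 * k + 1)
      else if (i : ℕ) = 1 then u ^ (2 * k) + (2 * (k : ℝ) + 1) * u ^ (6 * k)
      else if (i : ℕ) = 2 then u ^ (4 * k + 1)
      else u ^ (2 * (k + p ((i : ℕ) - 3)))) :
    ∃ b₀ > (0:ℝ), ∀ ℓ : ℕ, 1 ≤ ℓ → ∀ h : ℓ ≤ m + 3,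
      ∀ u ∈ Set.Ioo (0:ℝ) b₀,
        Matrix.det (Matrix.of fun r c : Fin ℓ =>
          iteratedDeriv (r : ℕ) (H (Fin.castLE h c)) u) ≠ 0 := by
  classical
  have hz : ∀ z : ℕ, z = 0 ∨ z = 1 ∨ z = 2 ∨ ∃ n, z = n + 3 := by
    intro z
    match z with
    | 0 => exact Or.inl rfl
    | 1 => exact Or.inr (Or.inl rfl)
    | 2 => exact Or.inr (Or.inr (Or.inl rfl))
    | (n+3) => exact Or.inr (Or.inr (Or.inr ⟨n, rfl⟩))
  set Q : ℕ → Polynomial ℝ :=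
    fun c => C 1 * X ^ (expE k p c) + C (coefB k c) * X ^ (expF k p c) with hQ
  -- H i is the evaluation of Q i
  have hHQ : ∀ i : Fin (m+3), H i = fun u => (Q ((i:ℕ))).eval u := by
    intro i
    funext u
    rw [hH, hQ]
    rcases hz (i:ℕ) with h0 | h0 | h0 | ⟨a, h0⟩ <;> simp [h0, expE, expF, coefB]
  -- injectivity of the lower exponents
  have heinj : ∀ x < m+3, ∀ y < m+3, expE k p x = expE k p y → x = y := by
    intro x hx y hy hxy
    rcases hz x with rfl | rfl | rfl | ⟨a, rfl⟩ <;>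
      rcases hz y with rfl | rfl | rfl | ⟨b, rfl⟩ <;>
      simp only [expE] at hxy <;>
      first
      | rfl
      | omega
      | exact absurd hxy.symm (hdist _ (by omega)).1
      | exact absurd hxy.symm (hdist _ (by omega)).2.1
      | exact absurd hxy.symm (hdist _ (by omega)).2.2
      | exact absurd hxy (hdist _ (by omega)).1
      | exact absurd hxy (hdist _ (by omega)).2.1
      | exact absurd hxy (hdist _ (by omega)).2.2
      | (by_contra hne; exact hdist' _ (by omega) _ (by omega) (by omega) hxy)
  have hef : ∀ c : ℕ, expE k p c ≤ expF k p c := by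
    intro c
    rcases hz c with rfl | rfl | rfl | ⟨a, rfl⟩ <;> simp only [expE, expF] <;> omega
  have hefstrict : ∀ c : ℕ, coefB k c ≠ 0 → expE k p c < expF k p c := by
    intro c hc
    rcases hz c with rfl | rfl | rfl | ⟨a, rfl⟩ <;> simp only [expE, expF] <;>
      first
      | omega
      | exact absurd rfl hc
  -- the main statement for a fixed ℓ
  have main : ∀ ℓ : ℕ, 1 ≤ ℓ → ∀ h : ℓ ≤ m + 3,
      ∃ ε > (0:ℝ), ∀ u ∈ Set.Ioo (0:ℝ) ε,
        Matrix.det (Matrix.of fun r c : Fin ℓ =>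
          iteratedDeriv (r : ℕ) (H (Fin.castLE h c)) u) ≠ 0 := by
    intro ℓ hℓ1 hℓ
    set W : Polynomial ℝ :=
      (Matrix.of fun r c : Fin ℓ => Polynomial.derivative^[(r:ℕ)] (Q (c:ℕ))).det with hW
    -- notation for the split data
    set T : ℕ := ∑ r : Fin ℓ, (r:ℕ) with hT
    set aa : Finset (Fin ℓ) → Fin ℓ → ℕ :=
      fun s c => if c ∈ s then expE k p (c:ℕ) else expF k p (c:ℕ) with haa
    set gg : Finset (Fin ℓ) → Fin ℓ → ℝ :=
      fun s c => if c ∈ s then (1:ℝ) else coefB k (c:ℕ) with hgg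
    have hsplit : W = ∑ s : Finset (Fin ℓ),
        C ((∏ c, gg s c) *
            (Matrix.of fun r c : Fin ℓ => (((aa s c)).descFactorial r : ℝ)).det)
          * X ^ (∑ c, aa s c - T) := by
      rw [hW]
      have h1 : (Matrix.of fun r c : Fin ℓ => Polynomial.derivative^[(r:ℕ)] (Q (c:ℕ)))
          = Matrix.of fun r c : Fin ℓ =>
              (fun (c : Fin ℓ) (r : Fin ℓ) =>
                Polynomial.derivative^[(r:ℕ)] (C 1 * X ^ (expE k p (c:ℕ)))) c r
              + (fun (c : Fin ℓ) (r : Fin ℓ) =>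
                Polynomial.derivative^[(r:ℕ)] (C (coefB k (c:ℕ)) * X ^ (expF k p (c:ℕ)))) c r := by
        ext r c
        rw [hQ]
        simp [iterate_map_add]
      rw [h1, aux_det_split]
      refine Finset.sum_congr rfl ?_
      intro s _
      have h2 : (Matrix.of fun r c : Fin ℓ =>
          if c ∈ s then Polynomial.derivative^[(r:ℕ)] (C 1 * X ^ (expE k p (c:ℕ)))
          else Polynomial.derivative^[(r:ℕ)] (C (coefB k (c:ℕ)) * X ^ (expF k p (c:ℕ))))
          = Matrix.of fun r c : Fin ℓ =>
              Polynomial.derivative^[(r:ℕ)] (C (gg s c) * X ^ (aa s c)) := by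
        ext r c
        by_cases hc : c ∈ s <;> simp [hgg, haa, hc]
      rw [h2, aux_mono_det]
    -- the distinguished coefficient
    have huniva : ∀ c : Fin ℓ, aa Finset.univ c = expE k p (c:ℕ) := by
      intro c
      simp [haa]
    have hEinj : Function.Injective (fun c : Fin ℓ => expE k p (c:ℕ)) := by
      intro c c' hcc
      have : (c:ℕ) = (c':ℕ) :=
        heinj (c:ℕ) (lt_of_lt_of_le c.isLt hℓ) (c':ℕ) (lt_of_lt_of_le c'.isLt hℓ) hcc
      exact Fin.ext this
    have hDuniv : (Matrix.of fun r c : Fin ℓ =>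
        (((aa Finset.univ c)).descFactorial r : ℝ)).det ≠ 0 := by
      have : (Matrix.of fun r c : Fin ℓ => (((aa Finset.univ c)).descFactorial r : ℝ))
          = (Matrix.of fun r c : Fin ℓ => (((expE k p (c:ℕ))).descFactorial r : ℝ)) := by
        ext r c
        simp only [Matrix.of_apply, huniva]
      rw [this]
      exact aux_detD_ne_zero _ hEinj
    have hTle : T ≤ ∑ c : Fin ℓ, expE k p (c:ℕ) := by
      have := aux_sum_ge (fun c : Fin ℓ => aa Finset.univ c) hDuniv
      simpa [huniva] using this
    have hcoeff : W.coeff (∑ c : Fin ℓ, expE k p (c:ℕ) - T)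
        = (∏ c, gg Finset.univ c) *
            (Matrix.of fun r c : Fin ℓ => (((aa Finset.univ c)).descFactorial r : ℝ)).det := by
      rw [hsplit, Polynomial.finset_sum_coeff]
      rw [Finset.sum_eq_single Finset.univ]
      · rw [Polynomial.coeff_C_mul, Polynomial.coeff_X_pow]
        have : (∑ c, aa Finset.univ c) = ∑ c : Fin ℓ, expE k p (c:ℕ) :=
          Finset.sum_congr rfl fun c _ => huniva c
        rw [this, if_pos rfl, mul_one]
      · intro s _ hs
        rw [Polynomial.coeff_C_mul, Polynomial.coeff_X_pow]
        by_cases hx : (∏ c, gg s c) *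
            (Matrix.of fun r c : Fin ℓ => (((aa s c)).descFactorial r : ℝ)).det = 0
        · rw [hx, zero_mul]
        · obtain ⟨hg, hD⟩ := mul_ne_zero_iff.mp hx
          have hTs : T ≤ ∑ c, aa s c := aux_sum_ge (fun c => aa s c) hD
          -- strict inequality of exponent sums
          obtain ⟨c₀, hc₀⟩ : ∃ c₀ : Fin ℓ, c₀ ∉ s := by
            by_contra hall
            push_neg at hall
            exact hs (Finset.eq_univ_iff_forall.mpr hall)
          have hg0 : gg s c₀ ≠ 0 := Finset.prod_ne_zero_iff.mp hg c₀ (Finset.mem_univ c₀)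
          have hB0 : coefB k (c₀:ℕ) ≠ 0 := by
            rw [hgg] at hg0
            simpa [hc₀] using hg0
          have hlt : (∑ c : Fin ℓ, expE k p (c:ℕ)) < ∑ c, aa s c := by
            refine Finset.sum_lt_sum (fun c _ => ?_) ⟨c₀, Finset.mem_univ c₀, ?_⟩
            · rw [haa]
              by_cases hc : c ∈ s
              · simp [hc]
              · simp only [hc, if_false]
                exact hef _
            · rw [haa]
              simp only [hc₀, if_false]
              exact hefstrict _ hB0
          have hne : (∑ c : Fin ℓ, expE k p (c:ℕ)) - T ≠ ∑ c, aa s c - T := by omega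
          rw [if_neg hne, mul_zero]
      · intro hu
        exact absurd (Finset.mem_univ _) hu
    have hxuniv : (∏ c, gg Finset.univ c) *
        (Matrix.of fun r c : Fin ℓ => (((aa Finset.univ c)).descFactorial r : ℝ)).det ≠ 0 := by
      refine mul_ne_zero ?_ hDuniv
      have : (∏ c, gg Finset.univ c) = 1 := by
        rw [hgg]
        simp
      rw [this]
      exact one_ne_zero
    have hWne : W ≠ 0 := by
      intro h0
      rw [h0, Polynomial.coeff_zero] at hcoeff
      exact hxuniv hcoeff.symm
    obtain ⟨ε, hε0, hεne⟩ := aux_eps W hWne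
    refine ⟨ε, hε0, ?_⟩
    intro u hu
    have hentry : (Matrix.of fun r c : Fin ℓ => iteratedDeriv (r:ℕ) (H (Fin.castLE hℓ c)) u)
        = ((Matrix.of fun r c : Fin ℓ =>
            Polynomial.derivative^[(r:ℕ)] (Q (c:ℕ))).map (Polynomial.evalRingHom u)) := by
      ext r c
      have hc : H (Fin.castLE hℓ c) = fun u => (Q ((c:ℕ))).eval u := by
        rw [hHQ (Fin.castLE hℓ c)]
        simp
      rw [Matrix.map_apply, Matrix.of_apply, Matrix.of_apply, hc, aux_iteratedDeriv_eval]
      simp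
    rw [hentry, ← RingHom.mapMatrix_apply, ← RingHom.map_det]
    exact hεne u hu
  -- combine the finitely many ℓ
  choose! ε hε0 hεne using main
  have hIcc : (Finset.Icc 1 (m+3)).Nonempty := ⟨1, Finset.mem_Icc.mpr ⟨le_refl 1, by omega⟩⟩
  refine ⟨(Finset.Icc 1 (m+3)).inf' hIcc ε, ?_, ?_⟩
  · rw [gt_iff_lt, Finset.lt_inf'_iff]
    intro b hb
    rw [Finset.mem_Icc] at hb
    exact hε0 b hb.1 hb.2
  · intro ℓ hℓ1 hℓ u hu
    refine hεne ℓ hℓ1 hℓ u ⟨hu.1, lt_of_lt_of_le hu.2 ?_⟩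
    exact Finset.inf'_le ε (Finset.mem_Icc.mpr ⟨hℓ1, hℓ⟩)
end
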